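/- For M ∈ Sp(2n) and a tangent vector η = ΩM with Ω Hamiltonian, the curve γ(t) = exp(t(Ω − Ω^T)) exp(t Ω^T) M satisfies γ(0) = M and γ'(0) = η, and γ(t) ∈ Sp(2n) for all t. -/

import Mathlib

open Matrix

/-- Entrywise derivative of `t ↦ exp (t • X)` at `0`, proved using the `L∞`-operator
norm instances (the statement itself only mentions the topology). -/
lemma hasDerivAt_exp_smul_entry {m : Type*} [Fintype m] [DecidableEq m]
    (X : Matrix m m ℝ) (i j : m) :
    HasDerivAt (fun t : ℝ => NormedSpace.exp (t • X) i j) (X i j) 0 := by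
  letI instR : NormedRing (Matrix m m ℝ) := Matrix.linftyOpNormedRing
  letI instA : NormedAlgebra ℝ (Matrix m m ℝ) := Matrix.linftyOpNormedAlgebra
  have H := hasDerivAt_exp_smul_const (𝕂 := ℝ) (𝔸 := Matrix m m ℝ) X (0 : ℝ)
  rw [zero_smul, NormedSpace.exp_zero, one_mul] at H
  let ev : Matrix m m ℝ →ₗ[ℝ] ℝ :=
    { toFun := fun A => A i j, map_add' := by intros; rfl, map_smul' := by intros; rfl }
  have hev : Continuous ev := ev.continuous_of_finiteDimensional
  exact (ContinuousLinearMap.hasFDerivAt ⟨ev, hev⟩).comp_hasDerivAt 0 H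

attribute [local instance] Matrix.normedAddCommGroup Matrix.normedSpace

/-- The standard symplectic matrix `J_{2n} = [[0, I_n], [-I_n, 0]]`. -/
def symplJ (n : ℕ) : Matrix (Fin n ⊕ Fin n) (Fin n ⊕ Fin n) ℝ :=
  Matrix.fromBlocks 0 1 (-1) 0

/-- The curve `γ(t) = exp(t(Ω − Ωᵀ)) exp(t Ωᵀ) M`. -/
noncomputable def geodCurve {n : ℕ}
    (M Ω : Matrix (Fin n ⊕ Fin n) (Fin n ⊕ Fin n) ℝ) (t : ℝ) :
    Matrix (Fin n ⊕ Fin n) (Fin n ⊕ Fin n) ℝ :=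
  NormedSpace.exp (t • (Ω - Ωᵀ)) * NormedSpace.exp (t • Ωᵀ) * M

/-- Product rule for matrix-valued functions with the entrywise sup norm. -/
lemma hasDerivAt_matrix_mul {m : Type*} [Fintype m]
    {f g : ℝ → Matrix m m ℝ} {f' g' : Matrix m m ℝ} {t : ℝ}
    (hf : HasDerivAt f f' t) (hg : HasDerivAt g g' t) :
    HasDerivAt (fun s => f s * g s) (f' * g t + f t * g') t := by
  refine hasDerivAt_pi.2 ?_
  intro i
  refine hasDerivAt_pi.2 ?_
  intro j
  have key : HasDerivAt (fun s => ∑ k, f s i k * g s k j)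
      (∑ k, (f' i k * g t k j + f t i k * g' k j)) t := by
    refine HasDerivAt.fun_sum fun k _ => ?_
    have h1 : HasDerivAt (fun s => f s i k) (f' i k) t := by
      have h := hf
      have h := hasDerivAt_pi.1 h
      have h := h i
      have h := hasDerivAt_pi.1 h
      exact h k
    have h2 : HasDerivAt (fun s => g s k j) (g' k j) t := by
      have h := hg
      have h := hasDerivAt_pi.1 h
      have h := h k
      have h := hasDerivAt_pi.1 h
      exact h j
    exact h1.mul h2
  simpa [Matrix.mul_apply, Finset.sum_add_distrib] using key

/-- Derivative of `t ↦ exp (t • X)` at `0` for the sup-norm instances. -/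
lemma hasDerivAt_exp_smul_zero {m : Type*} [Fintype m] [DecidableEq m]
    (X : Matrix m m ℝ) :
    HasDerivAt (fun t : ℝ => NormedSpace.exp (t • X)) X 0 := by
  refine hasDerivAt_pi.2 ?_
  intro i
  refine hasDerivAt_pi.2 ?_
  intro j
  exact hasDerivAt_exp_smul_entry X i j

lemma symplJ_mul_transpose (n : ℕ) : symplJ n * (symplJ n)ᵀ = 1 := by
  simp [symplJ, Matrix.fromBlocks_transpose, Matrix.fromBlocks_multiply,
    ← Matrix.fromBlocks_one]

lemma symplJ_transpose_mul (n : ℕ) : (symplJ n)ᵀ * symplJ n = 1 := by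
  simp [symplJ, Matrix.fromBlocks_transpose, Matrix.fromBlocks_multiply,
    ← Matrix.fromBlocks_one]

/-- If `Xᵀ J = J (-X)`, then `exp (t • X)` is symplectic for all `t`. -/
lemma exp_symplectic {n : ℕ} (X : Matrix (Fin n ⊕ Fin n) (Fin n ⊕ Fin n) ℝ)
    (hX : Xᵀ * symplJ n = symplJ n * (-X)) (t : ℝ) :
    (NormedSpace.exp (t • X))ᵀ * symplJ n * NormedSpace.exp (t • X) = symplJ n := by
  set J := symplJ n with hJ
  have hXt : Xᵀ = J * (-X) * Jᵀ := by
    calc Xᵀ = Xᵀ * (J * Jᵀ) := by rw [symplJ_mul_transpose, mul_one]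
    _ = (Xᵀ * J) * Jᵀ := by rw [mul_assoc]
    _ = J * (-X) * Jᵀ := by rw [hX]
  let U : (Matrix (Fin n ⊕ Fin n) (Fin n ⊕ Fin n) ℝ)ˣ :=
    ⟨J, Jᵀ, symplJ_mul_transpose n, symplJ_transpose_mul n⟩
  have hsmul : (t • X)ᵀ = (U : Matrix _ _ ℝ) * (-(t • X)) * (↑U⁻¹ : Matrix _ _ ℝ) := by
    show (t • X)ᵀ = J * (-(t • X)) * Jᵀ
    rw [Matrix.transpose_smul, hXt, ← smul_neg]
    simp [Matrix.smul_mul, Matrix.mul_smul]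
  have hconj : NormedSpace.exp ((t • X)ᵀ) =
      J * NormedSpace.exp (-(t • X)) * Jᵀ := by
    rw [hsmul, Matrix.exp_units_conj U (-(t • X))]
    rfl
  have hcancel : NormedSpace.exp (-(t • X)) * NormedSpace.exp (t • X) = 1 := by
    rw [← Matrix.exp_add_of_commute _ _ ((Commute.refl (t • X)).neg_left),
      neg_add_cancel, NormedSpace.exp_zero]
  calc (NormedSpace.exp (t • X))ᵀ * J * NormedSpace.exp (t • X)
      = NormedSpace.exp ((t • X)ᵀ) * J * NormedSpace.exp (t • X) := by
        rw [Matrix.exp_transpose]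
    _ = J * NormedSpace.exp (-(t • X)) * (Jᵀ * J) * NormedSpace.exp (t • X) := by
        rw [hconj]; noncomm_ring
    _ = J * (NormedSpace.exp (-(t • X)) * NormedSpace.exp (t • X)) := by
        rw [symplJ_transpose_mul]; noncomm_ring
    _ = J := by rw [hcancel, mul_one]

theorem geodesic_curve_properties {n : ℕ}
    (M Ω : Matrix (Fin n ⊕ Fin n) (Fin n ⊕ Fin n) ℝ)
    (hM : Mᵀ * symplJ n * M = symplJ n)
    (hΩ : (symplJ n)ᵀ * Ωᵀ * symplJ n = -Ω) :
    geodCurve M Ω 0 = M ∧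
    HasDerivAt (geodCurve M Ω) (Ω * M) 0 ∧
    ∀ t : ℝ, (geodCurve M Ω t)ᵀ * symplJ n * geodCurve M Ω t = symplJ n := by
  have hinit : geodCurve M Ω 0 = M := by
    simp [geodCurve]
  refine ⟨hinit, ?_, ?_⟩
  · -- derivative
    have hf := hasDerivAt_exp_smul_zero (Ω - Ωᵀ)
    have hg := hasDerivAt_exp_smul_zero (Ωᵀ)
    have hfg := hasDerivAt_matrix_mul hf hg
    have hM' : HasDerivAt (fun _ : ℝ => M) (0 : Matrix _ _ ℝ) 0 := hasDerivAt_const 0 M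
    have h := hasDerivAt_matrix_mul hfg hM'
    have : HasDerivAt (geodCurve M Ω)
        (((Ω - Ωᵀ) * NormedSpace.exp ((0:ℝ) • Ωᵀ) +
          NormedSpace.exp ((0:ℝ) • (Ω - Ωᵀ)) * Ωᵀ) * M +
          NormedSpace.exp ((0:ℝ) • (Ω - Ωᵀ)) * NormedSpace.exp ((0:ℝ) • Ωᵀ) * 0) 0 := h
    simpa [sub_mul, sub_add_cancel] using this
  · -- symplectic for all t
    intro t
    have hΩJ : Ωᵀ * symplJ n = symplJ n * (-Ω) := by
      calc Ωᵀ * symplJ n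
          = (symplJ n * (symplJ n)ᵀ) * Ωᵀ * symplJ n := by
            rw [symplJ_mul_transpose, one_mul]
        _ = symplJ n * ((symplJ n)ᵀ * Ωᵀ * symplJ n) := by noncomm_ring
        _ = symplJ n * (-Ω) := by rw [hΩ]
    have hΩ' : (symplJ n)ᵀ * Ω * symplJ n = -Ωᵀ := by
      have h := congrArg Matrix.transpose hΩ
      simpa [Matrix.transpose_mul, Matrix.transpose_neg, mul_assoc] using h
    have hΩJ2 : Ω * symplJ n = symplJ n * (-Ωᵀ) := by
      calc Ω * symplJ n
          = (symplJ n * (symplJ n)ᵀ) * Ω * symplJ n := by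
            rw [symplJ_mul_transpose, one_mul]
        _ = symplJ n * ((symplJ n)ᵀ * Ω * symplJ n) := by noncomm_ring
        _ = symplJ n * (-Ωᵀ) := by rw [hΩ']
    have hA : (Ω - Ωᵀ)ᵀ * symplJ n = symplJ n * (-(Ω - Ωᵀ)) := by
      rw [Matrix.transpose_sub, Matrix.transpose_transpose, sub_mul, hΩJ, hΩJ2]
      noncomm_ring
    have hB : (Ωᵀ)ᵀ * symplJ n = symplJ n * (-Ωᵀ) := by
      rw [Matrix.transpose_transpose]; exact hΩJ2
    have e1 := exp_symplectic (Ω - Ωᵀ) hA t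
    have e2 := exp_symplectic (Ωᵀ) hB t
    show (NormedSpace.exp (t • (Ω - Ωᵀ)) * NormedSpace.exp (t • Ωᵀ) * M)ᵀ *
        symplJ n * (NormedSpace.exp (t • (Ω - Ωᵀ)) * NormedSpace.exp (t • Ωᵀ) * M) = symplJ n
    rw [Matrix.transpose_mul, Matrix.transpose_mul]
    calc Mᵀ * ((NormedSpace.exp (t • Ωᵀ))ᵀ * (NormedSpace.exp (t • (Ω - Ωᵀ)))ᵀ) *
          symplJ n * (NormedSpace.exp (t • (Ω - Ωᵀ)) * NormedSpace.exp (t • Ωᵀ) * M)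
        = Mᵀ * ((NormedSpace.exp (t • Ωᵀ))ᵀ *
            ((NormedSpace.exp (t • (Ω - Ωᵀ)))ᵀ * symplJ n * NormedSpace.exp (t • (Ω - Ωᵀ))) *
            NormedSpace.exp (t • Ωᵀ)) * M := by noncomm_ring
      _ = Mᵀ * ((NormedSpace.exp (t • Ωᵀ))ᵀ * symplJ n * NormedSpace.exp (t • Ωᵀ)) * M := by
          rw [e1]
      _ = Mᵀ * symplJ n * M := by rw [e2]
      _ = symplJ n := hM
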